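/- arXiv:1406.3991 — 2 statements merged into one kernel-verified Lean document; each statement's English description precedes it below -/
import Mathlib

section
/- Let f : ℝⁿ → ℝ be twice continuously differentiable on an open set containing the compact set 𝒳 ⊆ ℝⁿ, and suppose that for all x ∈ 𝒳 and all i, j = 1,…,n one has M̲ᵢⱼ < ∂²f/∂xⱼ∂xᵢ(x) < M̄ᵢⱼ. Then for any xₐ, x_b ∈ 𝒳 such that the line segment between xₐ and x_b is contained in 𝒳, one has f(x_b) − f(xₐ) ≥ ∇f(xₐ)ᵀ(x_b − xₐ) + (1/2) Σᵢ₌₁ⁿ Σⱼ₌₁ⁿ min( M̲ᵢⱼ (x_{b,i} − x_{a,i})(x_{b,j} − x_{a,j}), M̄ᵢⱼ (x_{b,i} − x_{a,i})(x_{b,j} − x_{a,j}) ). -/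
/-!
Restrict `f` to the segment: `g t = f (xa + t • d)` with `d = xb - xa`. Then `g'' t` is the Hessian
quadratic form `∑ i j, ∂²f/∂xⱼ∂xᵢ · dᵢ dⱼ` at a point of the segment, and each of its terms is at
least the corresponding `min`, whatever the sign of `dᵢ dⱼ`. A lower bound `m ≤ g''` on `[0, 1]`
gives `g 1 - g 0 ≥ g' 0 + m / 2` by integrating twice, i.e. by two monotonicity arguments.
-/

open Finset

/-- The partial derivative ∂f/∂xᵢ of `f : ℝⁿ → ℝ` at `x`. -/
noncomputable def pderiv1 {n : ℕ} (f : (Fin n → ℝ) → ℝ) (i : Fin n) (x : Fin n → ℝ) : ℝ :=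
  fderiv ℝ f x (Pi.single i 1)

/-- The second partial derivative ∂²f/∂xⱼ∂xᵢ of `f : ℝⁿ → ℝ` at `x`. -/
noncomputable def pderiv2 {n : ℕ} (f : (Fin n → ℝ) → ℝ) (i j : Fin n) (x : Fin n → ℝ) : ℝ :=
  pderiv1 (pderiv1 f i) j x

open Set

lemma monotoneOn_Icc_of_hasDerivAt_nonneg {φ φ' : ℝ → ℝ} {a b : ℝ}
    (hφ : ∀ t ∈ Icc a b, HasDerivAt φ (φ' t) t) (hφ' : ∀ t ∈ Icc a b, 0 ≤ φ' t) :
    MonotoneOn φ (Icc a b) :=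
  monotoneOn_of_hasDerivWithinAt_nonneg (convex_Icc a b)
    (fun t ht => (hφ t ht).continuousAt.continuousWithinAt)
    (fun t ht => (hφ t (interior_subset ht)).hasDerivWithinAt)
    (fun t ht => hφ' t (interior_subset ht))

theorem mul_sub_add_le_image_sub_of_le_deriv2 {g g' g'' : ℝ → ℝ} {a b m : ℝ} (hab : a ≤ b)
    (hg : ∀ t ∈ Icc a b, HasDerivAt g (g' t) t) (hg' : ∀ t ∈ Icc a b, HasDerivAt g' (g'' t) t)
    (hm : ∀ t ∈ Icc a b, m ≤ g'' t) :
    g' a * (b - a) + m / 2 * (b - a) ^ 2 ≤ g b - g a := by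
  have ha : a ∈ Icc a b := left_mem_Icc.2 hab
  have hψ : MonotoneOn (fun t => g' t - m * t) (Icc a b) :=
    monotoneOn_Icc_of_hasDerivAt_nonneg
      (fun t ht => ((hg' t ht).sub ((hasDerivAt_id t).const_mul m)).congr_deriv (by ring))
      (fun t ht => sub_nonneg.2 (hm t ht))
  have hφ : MonotoneOn (fun t => g t - g' a * t - m / 2 * (t - a) ^ 2) (Icc a b) := by
    refine monotoneOn_Icc_of_hasDerivAt_nonneg (φ' := fun t => g' t - g' a - m * (t - a))
      (fun t ht => ?_) (fun t ht => ?_)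
    · have := ((hg t ht).sub ((hasDerivAt_id t).const_mul (g' a))).sub
        ((((hasDerivAt_id t).sub_const a).pow 2).const_mul (m / 2))
      refine this.congr_deriv ?_
      simp only [mul_one, Nat.cast_ofNat, id_eq, pow_one, Nat.add_one_sub_one]
      ring
    · have := hψ ha ht ht.1
      simp only at this
      linarith
  have := hφ ha (right_mem_Icc.2 hab) hab
  simp only [sub_self] at this
  linarith

lemma ContinuousLinearMap.apply_eq_sum_single {ι M : Type*} [Fintype ι] [DecidableEq ι]
    [AddCommMonoid M] [Module ℝ M] [TopologicalSpace M]
    (L : (ι → ℝ) →L[ℝ] M) (v : ι → ℝ) : L v = ∑ i, v i • L (Pi.single i 1) := by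
  conv_lhs => rw [pi_eq_sum_univ' v]
  simp only [map_sum, map_smul]

lemma ContinuousLinearMap.apply_apply_eq_sum_single {ι : Type*} [Fintype ι] [DecidableEq ι]
    (B : (ι → ℝ) →L[ℝ] (ι → ℝ) →L[ℝ] ℝ) (v w : ι → ℝ) :
    B v w = ∑ i, ∑ j, B (Pi.single i 1) (Pi.single j 1) * (v i * w j) := by
  rw [B.apply_eq_sum_single v, _root_.sum_apply]
  refine Finset.sum_congr rfl fun i _ => ?_
  rw [smul_apply, apply_eq_sum_single _ w, Finset.smul_sum]
  refine Finset.sum_congr rfl fun j _ => ?_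
  simp only [smul_eq_mul]
  ring

lemma hasDerivAt_comp_add_smul {E F : Type*} [NormedAddCommGroup E] [NormedSpace ℝ E]
    [NormedAddCommGroup F] [NormedSpace ℝ F] {f : E → F} {x d : E} {t : ℝ}
    (hf : DifferentiableAt ℝ f (x + t • d)) :
    HasDerivAt (fun s : ℝ => f (x + s • d)) (fderiv ℝ f (x + t • d) d) t := by
  have hline : HasDerivAt (fun s : ℝ => x + s • d) d t := by
    simpa using ((hasDerivAt_id t).smul_const d).const_add x
  exact hf.hasFDerivAt.comp_hasDerivAt t hline

lemma sum_pderiv1_mul {n : ℕ} (f : (Fin n → ℝ) → ℝ) (x d : Fin n → ℝ) :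
    ∑ i, pderiv1 f i x * d i = fderiv ℝ f x d := by
  simp only [(fderiv ℝ f x).apply_eq_sum_single d, pderiv1, smul_eq_mul, mul_comm]

lemma pderiv2_eq_fderiv_fderiv {n : ℕ} {f : (Fin n → ℝ) → ℝ} {x : Fin n → ℝ}
    (hf : DifferentiableAt ℝ (fderiv ℝ f) x) (i j : Fin n) :
    pderiv2 f i j x = fderiv ℝ (fderiv ℝ f) x (Pi.single j 1) (Pi.single i 1) := by
  change fderiv ℝ (fun y => fderiv ℝ f y (Pi.single i 1)) x (Pi.single j 1) = _
  simp [fderiv_clm_apply hf (differentiableAt_const _)]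

lemma sum_sum_pderiv2_mul {n : ℕ} {f : (Fin n → ℝ) → ℝ} {x : Fin n → ℝ}
    (hf : DifferentiableAt ℝ (fderiv ℝ f) x) (d : Fin n → ℝ) :
    ∑ i, ∑ j, pderiv2 f i j x * (d i * d j) = fderiv ℝ (fderiv ℝ f) x d d := by
  rw [ContinuousLinearMap.apply_apply_eq_sum_single, Finset.sum_comm]
  refine Finset.sum_congr rfl fun i _ => Finset.sum_congr rfl fun j _ => ?_
  rw [pderiv2_eq_fderiv_fderiv hf, mul_comm (d j)]

lemma min_mul_le_mul {a b c p : ℝ} (ha : a ≤ c) (hb : c ≤ b) : min (a * p) (b * p) ≤ c * p := by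
  rcases le_total 0 p with hp | hp
  · exact (min_le_left _ _).trans (mul_le_mul_of_nonneg_right ha hp)
  · exact (min_le_right _ _).trans (mul_le_mul_of_nonpos_right hb hp)

theorem quadratic_lower_bound_general {n : ℕ} (f : (Fin n → ℝ) → ℝ) (X U : Set (Fin n → ℝ))
    (hU : IsOpen U) (hXU : X ⊆ U)
    (hf : ContDiffOn ℝ 2 f U)
    (Ml Mu : Fin n → Fin n → ℝ)
    (hM : ∀ x ∈ X, ∀ i j, Ml i j < pderiv2 f i j x ∧ pderiv2 f i j x < Mu i j)
    (xa xb : Fin n → ℝ)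
    (hseg : segment ℝ xa xb ⊆ X) :
    f xb - f xa ≥ (∑ i, pderiv1 f i xa * (xb i - xa i)) +
      (1 / 2) * ∑ i, ∑ j, min (Ml i j * ((xb i - xa i) * (xb j - xa j)))
        (Mu i j * ((xb i - xa i) * (xb j - xa j))) := by
  set d := xb - xa
  have hX : ∀ t ∈ Icc (0 : ℝ) 1, xa + t • d ∈ X := fun t ht =>
    hseg (segment_eq_image' ℝ xa xb ▸ ⟨t, ht, rfl⟩)
  have hC2 : ∀ t ∈ Icc (0 : ℝ) 1, ContDiffAt ℝ 2 f (xa + t • d) := fun t ht =>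
    hf.contDiffAt (hU.mem_nhds (hXU (hX t ht)))
  have hD2 : ∀ t ∈ Icc (0 : ℝ) 1, DifferentiableAt ℝ (fderiv ℝ f) (xa + t • d) := fun t ht =>
    ((hC2 t ht).fderiv_right (m := 1) le_rfl).differentiableAt one_ne_zero
  have hbound : ∀ t ∈ Icc (0 : ℝ) 1, ∑ i, ∑ j, min (Ml i j * (d i * d j)) (Mu i j * (d i * d j))
      ≤ fderiv ℝ (fderiv ℝ f) (xa + t • d) d d := by
    intro t ht
    rw [← sum_sum_pderiv2_mul (hD2 t ht)]
    exact Finset.sum_le_sum fun i _ => Finset.sum_le_sum fun j _ =>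
      min_mul_le_mul (hM _ (hX t ht) i j).1.le (hM _ (hX t ht) i j).2.le
  have htaylor := mul_sub_add_le_image_sub_of_le_deriv2 zero_le_one
    (fun t ht => hasDerivAt_comp_add_smul ((hC2 t ht).differentiableAt two_ne_zero))
    (fun t ht => by
      simpa using (hasDerivAt_comp_add_smul (hD2 t ht)).clm_apply (hasDerivAt_const t d))
    hbound
  rw [← sum_pderiv1_mul] at htaylor
  simp only [zero_smul, add_zero, one_smul, sub_zero, one_pow, mul_one, d, Pi.sub_apply,
    add_sub_cancel] at htaylor
  linarith

theorem quadratic_lower_bound {n : ℕ} (f : (Fin n → ℝ) → ℝ) (X U : Set (Fin n → ℝ))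
    (hX : IsCompact X) (hU : IsOpen U) (hXU : X ⊆ U)
    (hf : ContDiffOn ℝ 2 f U)
    (Ml Mu : Fin n → Fin n → ℝ)
    (hM : ∀ x ∈ X, ∀ i j, Ml i j < pderiv2 f i j x ∧ pderiv2 f i j x < Mu i j)
    (xa xb : Fin n → ℝ) (hxa : xa ∈ X) (hxb : xb ∈ X)
    (hseg : segment ℝ xa xb ⊆ X) :
    f xb - f xa ≥ (∑ i, pderiv1 f i xa * (xb i - xa i)) +
      (1 / 2) * ∑ i, ∑ j, min (Ml i j * ((xb i - xa i) * (xb j - xa j)))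
        (Mu i j * ((xb i - xa i) * (xb j - xa j))) :=
  quadratic_lower_bound_general f X U hU hXU hf Ml Mu hM xa xb hseg
end

section
/- Let f : ℝⁿ → ℝ be twice continuously differentiable on an open set containing the compact set 𝒳 ⊆ ℝⁿ, and suppose that for all x ∈ 𝒳 and all i, j = 1,…,n one has M̲ᵢⱼ < ∂²f/∂xⱼ∂xᵢ(x) < M̄ᵢⱼ. Then for any xₐ, x_b ∈ 𝒳 such that the line segment between xₐ and x_b is contained in 𝒳, one has f(x_b) − f(xₐ) ≤ ∇f(xₐ)ᵀ(x_b − xₐ) + (1/2) Σᵢ₌₁ⁿ Σⱼ₌₁ⁿ max( M̲ᵢⱼ (x_{b,i} − x_{a,i})(x_{b,j} − x_{a,j}), M̄ᵢⱼ (x_{b,i} − x_{a,i})(x_{b,j} − x_{a,j}) ). -/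
/-!
Restricted to the segment, `g t = f (xa + t • (xb - xa))` has `g'' t` equal to the Hessian quadratic
form in `xb - xa` at a point of `X`; bounding each Hessian entry by `Ml` or `Mu` according to the sign
of `(xb i - xa i) * (xb j - xa j)` gives `g'' ≤ B` on `[0, 1]`, and integrating this twice (via
monotonicity of `g' t - B t` and then of `g t - g' 0 t - B t² / 2`) gives
`g 1 - g 0 ≤ g' 0 + B / 2`.
-/

open Finset

open Set

section
variable {n : ℕ}

theorem fderiv_apply_eq_sum_pderiv1 (f : (Fin n → ℝ) → ℝ) (x v : Fin n → ℝ) :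
    fderiv ℝ f x v = ∑ i, pderiv1 f i x * v i := by
  conv_lhs => rw [pi_eq_sum_univ' v]
  simp [pderiv1, mul_comm]

theorem hasDerivAt_comp_add_smul_s3 {f : (Fin n → ℝ) → ℝ} {x v : Fin n → ℝ} {t : ℝ}
    (hf : DifferentiableAt ℝ f (x + t • v)) :
    HasDerivAt (fun s : ℝ => f (x + s • v)) (∑ i, pderiv1 f i (x + t • v) * v i) t := by
  have hline : HasDerivAt (fun s : ℝ => x + s • v) v t := by
    simpa using ((hasDerivAt_id' t).smul_const v).const_add x
  have hcomp := hf.hasFDerivAt.comp_hasDerivAt t hline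
  rwa [fderiv_apply_eq_sum_pderiv1] at hcomp

theorem differentiableAt_pderiv1 {f : (Fin n → ℝ) → ℝ} {U : Set (Fin n → ℝ)} {x : Fin n → ℝ}
    (hU : IsOpen U) (hf : ContDiffOn ℝ 2 f U) (hx : x ∈ U) (i : Fin n) :
    DifferentiableAt ℝ (pderiv1 f i) x :=
  ((hf.fderiv_of_isOpen hU (by norm_num)).clm_apply contDiffOn_const |>.differentiableOn
    one_ne_zero).differentiableAt (hU.mem_nhds hx)

end

theorem mul_le_max_mul_of_le_of_le {l h u : ℝ} (hl : l ≤ h) (hu : h ≤ u) (s : ℝ) :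
    h * s ≤ max (l * s) (u * s) := by
  rcases le_total 0 s with hs | hs
  · exact (mul_le_mul_of_nonneg_right hu hs).trans (le_max_right _ _)
  · exact (mul_le_mul_of_nonpos_right hl hs).trans (le_max_left _ _)

theorem sum_sum_mul_le_sum_sum_max {ι : Type*} [Fintype ι] {H L M : ι → ι → ℝ}
    (hL : ∀ i j, L i j ≤ H i j) (hM : ∀ i j, H i j ≤ M i j) (v : ι → ℝ) :
    ∑ i, (∑ j, H i j * v j) * v i ≤ ∑ i, ∑ j, max (L i j * (v i * v j)) (M i j * (v i * v j)) := by
  refine sum_le_sum fun i _ => ?_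
  rw [sum_mul]
  refine sum_le_sum fun j _ => ?_
  calc H i j * v j * v i = H i j * (v i * v j) := by ring
    _ ≤ _ := mul_le_max_mul_of_le_of_le (hL i j) (hM i j) _

theorem monotoneOn_sub_of_hasDerivWithinAt_le {D : Set ℝ} (hD : Convex ℝ D) {f g f' g' : ℝ → ℝ}
    (hf : ∀ x ∈ D, HasDerivWithinAt f (f' x) D x) (hg : ∀ x ∈ D, HasDerivWithinAt g (g' x) D x)
    (hle : ∀ x ∈ interior D, f' x ≤ g' x) : MonotoneOn (fun x => g x - f x) D := by
  have hgf : ∀ x ∈ D, HasDerivWithinAt (fun x => g x - f x) (g' x - f' x) D x :=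
    fun x hx => (hg x hx).sub (hf x hx)
  refine monotoneOn_of_hasDerivWithinAt_nonneg hD (fun x hx => (hgf x hx).continuousWithinAt)
    (fun x hx => (hgf x (interior_subset hx)).mono interior_subset) fun x hx => ?_
  linarith [hle x hx]

theorem sub_le_deriv_mul_add_of_deriv2_le {g g' g'' : ℝ → ℝ} {a b B : ℝ} (hab : a ≤ b)
    (hg : ∀ t ∈ Icc a b, HasDerivWithinAt g (g' t) (Icc a b) t)
    (hg' : ∀ t ∈ Icc a b, HasDerivWithinAt g' (g'' t) (Icc a b) t)
    (hB : ∀ t ∈ Ioo a b, g'' t ≤ B) :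
    g b - g a ≤ g' a * (b - a) + B * (b - a) ^ 2 / 2 := by
  have ha : a ∈ Icc a b := ⟨le_rfl, hab⟩
  have hslope : ∀ t ∈ Icc a b, g' t ≤ g' a + B * (t - a) := by
    intro t ht
    have hmono := monotoneOn_sub_of_hasDerivWithinAt_le (convex_Icc a b) hg'
      (fun t _ => ((hasDerivAt_id' t).const_mul B).hasDerivWithinAt)
      (by simpa only [interior_Icc, mul_one] using hB)
    have : B * a - g' a ≤ B * t - g' t := hmono ha ht ht.1
    linarith
  have hquad : ∀ t ∈ Icc a b, HasDerivWithinAt (fun t => g' a * t + B * (t - a) ^ 2 / 2)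
      (g' a + B * (t - a)) (Icc a b) t := by
    intro t _
    refine HasDerivAt.hasDerivWithinAt <| (((hasDerivAt_id' t).const_mul (g' a)).fun_add
      ((((hasDerivAt_id' t).sub_const a).fun_pow 2).const_mul B |>.div_const 2)).congr_deriv ?_
    norm_num
    ring
  have hmono := monotoneOn_sub_of_hasDerivWithinAt_le (convex_Icc a b) hg hquad
    (fun t ht => hslope t (interior_subset ht))
  have : g' a * a + B * (a - a) ^ 2 / 2 - g a ≤ g' a * b + B * (b - a) ^ 2 / 2 - g b :=
    hmono ha ⟨hab, le_rfl⟩ hab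
  nlinarith

theorem quadratic_upper_bound_general {n : ℕ} (f : (Fin n → ℝ) → ℝ) (X U : Set (Fin n → ℝ))
    (hU : IsOpen U) (hXU : X ⊆ U)
    (hf : ContDiffOn ℝ 2 f U)
    (Ml Mu : Fin n → Fin n → ℝ)
    (hM : ∀ x ∈ X, ∀ i j, Ml i j < pderiv2 f i j x ∧ pderiv2 f i j x < Mu i j)
    (xa xb : Fin n → ℝ)
    (hseg : segment ℝ xa xb ⊆ X) :
    f xb - f xa ≤ (∑ i, pderiv1 f i xa * (xb i - xa i)) +
      (1 / 2) * ∑ i, ∑ j, max (Ml i j * ((xb i - xa i) * (xb j - xa j)))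
        (Mu i j * ((xb i - xa i) * (xb j - xa j))) := by
  set v := xb - xa with hv
  have hlineX : ∀ t ∈ Icc (0 : ℝ) 1, xa + t • v ∈ X := fun t ht =>
    hseg (by rw [segment_eq_image']; exact ⟨t, ht, rfl⟩)
  have hlineU : ∀ t ∈ Icc (0 : ℝ) 1, xa + t • v ∈ U := fun t ht => hXU (hlineX t ht)
  have hderiv : ∀ t ∈ Icc (0 : ℝ) 1, HasDerivAt (fun s => f (xa + s • v))
      (∑ i, pderiv1 f i (xa + t • v) * v i) t := fun t ht =>
    hasDerivAt_comp_add_smul_s3 <|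
      (hf.differentiableOn (by norm_num)).differentiableAt (hU.mem_nhds (hlineU t ht))
  have hderiv2 : ∀ t ∈ Icc (0 : ℝ) 1, HasDerivAt (fun s => ∑ i, pderiv1 f i (xa + s • v) * v i)
      (∑ i, (∑ j, pderiv2 f i j (xa + t • v) * v j) * v i) t := fun t ht =>
    HasDerivAt.fun_sum fun i _ =>
      (hasDerivAt_comp_add_smul_s3 (differentiableAt_pderiv1 hU hf (hlineU t ht) i)).mul_const (v i)
  have hbound : ∀ t ∈ Ioo (0 : ℝ) 1, ∑ i, (∑ j, pderiv2 f i j (xa + t • v) * v j) * v i ≤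
      ∑ i, ∑ j, max (Ml i j * (v i * v j)) (Mu i j * (v i * v j)) := fun t ht =>
    have hMt := hM _ (hlineX t (Ioo_subset_Icc_self ht))
    sum_sum_mul_le_sum_sum_max (fun i j => (hMt i j).1.le) (fun i j => (hMt i j).2.le) v
  have htaylor := sub_le_deriv_mul_add_of_deriv2_le zero_le_one
    (fun t ht => (hderiv t ht).hasDerivWithinAt) (fun t ht => (hderiv2 t ht).hasDerivWithinAt)
    hbound
  simp only [zero_smul, add_zero, one_smul, sub_zero, one_pow, mul_one, hv, add_sub_cancel,
    Pi.sub_apply] at htaylor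
  linarith

theorem quadratic_upper_bound {n : ℕ} (f : (Fin n → ℝ) → ℝ) (X U : Set (Fin n → ℝ))
    (hX : IsCompact X) (hU : IsOpen U) (hXU : X ⊆ U)
    (hf : ContDiffOn ℝ 2 f U)
    (Ml Mu : Fin n → Fin n → ℝ)
    (hM : ∀ x ∈ X, ∀ i j, Ml i j < pderiv2 f i j x ∧ pderiv2 f i j x < Mu i j)
    (xa xb : Fin n → ℝ) (hxa : xa ∈ X) (hxb : xb ∈ X)
    (hseg : segment ℝ xa xb ⊆ X) :
    f xb - f xa ≤ (∑ i, pderiv1 f i xa * (xb i - xa i)) +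
      (1 / 2) * ∑ i, ∑ j, max (Ml i j * ((xb i - xa i) * (xb j - xa j)))
        (Mu i j * ((xb i - xa i) * (xb j - xa j))) :=
  quadratic_upper_bound_general f X U hU hXU hf Ml Mu hM xa xb hseg
end
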